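/- Integrated coercivity of the p-Laplace flux in the singular range: let p ∈ (1, 2]. There exists a constant C > 0 depending only on p such that for every measure space (Ω, μ) and all measurable f, g : Ω → ℝ^d with ‖f‖_{L^p(μ)} < ∞ and ‖g‖_{L^p(μ)} < ∞, one has ‖f − g‖_{L^p(μ)}^2 ≤ C (‖f‖_{L^p(μ)} + ‖g‖_{L^p(μ)})^{2−p} ∫_Ω (A∘f − A∘g) · (f − g) dμ (the integrand being pointwise nonnegative, the integral is a well-defined value in [0, ∞]). -/

import Mathlib

open MeasureTheory
open scoped RealInnerProductSpace

/-- The p-Laplace flux `A(τ) = |τ|^{p-2} τ` (with `A(0) = 0`). -/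
noncomputable def pFlux (d : ℕ) (p : ℝ) (τ : EuclideanSpace ℝ (Fin d)) :
    EuclideanSpace ℝ (Fin d) := ‖τ‖ ^ (p - 2) • τ

/-- The `L^q` norm `(∫_Ω |h|^q dμ)^{1/q}` of a vector-valued function, in `[0, ∞]`. -/
noncomputable def vecLpNorm {Ω : Type*} [MeasurableSpace Ω] (μ : Measure Ω) {d : ℕ}
    (h : Ω → EuclideanSpace ℝ (Fin d)) (q : ℝ) : ENNReal :=
  (∫⁻ ω, ENNReal.ofReal (‖h ω‖ ^ q) ∂μ) ^ (1 / q)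

/-! With `s = ‖a‖`, `t = ‖b‖`, the flux pairing splits as
`⟪A a - A b, a - b⟫ = (s^(p-1) - t^(p-1)) (s - t) + (s^(p-2) + t^(p-2)) (s t - ⟪a, b⟫)`,
while `‖a - b‖² = (s - t)² + 2 (s t - ⟪a, b⟫)`. Since `τ ↦ τ^(p-2)` is nonincreasing, each part
of the pairing dominates `(p - 1) (s + t)^(p-2)` times the matching part of `‖a - b‖²` (the radial
one by the mean value theorem). Raising the resulting pointwise bound to the power `p / 2`, Hölder's
inequality with exponents `2 / p` and `2 / (2 - p)` and Minkowski's inequality for `‖f‖ + ‖g‖` give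
the claim with `C = (p - 1)⁻¹`. -/

lemma mul_add_rpow_mul_sub_le_rpow_sub_rpow {p s t : ℝ} (hp1 : 1 ≤ p) (hp2 : p ≤ 2)
    (ht : 0 ≤ t) (hts : t ≤ s) :
    (p - 1) * (s + t) ^ (p - 2) * (s - t) ≤ s ^ (p - 1) - t ^ (p - 1) := by
  refine (convex_Icc t s).mul_sub_le_image_sub_of_le_deriv
    (fun x _ => (Real.continuousAt_rpow_const x _ (Or.inr (by linarith))).continuousWithinAt)
    (fun x hx => ?_) (fun x hx => ?_) t (Set.left_mem_Icc.2 hts) s (Set.right_mem_Icc.2 hts) hts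
  all_goals
    rw [interior_Icc] at hx
    have hx0 : 0 < x := ht.trans_lt hx.1
  · exact (Real.hasDerivAt_rpow_const (Or.inl hx0.ne')).differentiableAt.differentiableWithinAt
  · rw [(Real.hasDerivAt_rpow_const (Or.inl hx0.ne')).deriv, show p - 1 - 1 = p - 2 by ring]
    exact mul_le_mul_of_nonneg_left
      (Real.rpow_le_rpow_of_nonpos hx0 (by linarith [hx.2]) (by linarith)) (by linarith)

lemma mul_add_rpow_mul_sq_le_rpow_sub_rpow_mul_sub {p s t : ℝ} (hp1 : 1 ≤ p) (hp2 : p ≤ 2)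
    (hs : 0 ≤ s) (ht : 0 ≤ t) :
    (p - 1) * (s + t) ^ (p - 2) * (s - t) ^ 2 ≤ (s ^ (p - 1) - t ^ (p - 1)) * (s - t) := by
  rcases le_total t s with hts | hst
  · have := mul_add_rpow_mul_sub_le_rpow_sub_rpow hp1 hp2 ht hts
    rw [sq, ← mul_assoc]
    exact mul_le_mul_of_nonneg_right this (by linarith)
  · have := mul_add_rpow_mul_sub_le_rpow_sub_rpow hp1 hp2 hs hst
    rw [add_comm] at this
    nlinarith

lemma two_mul_add_rpow_le_rpow_add_rpow {p s t : ℝ} (hp2 : p ≤ 2) (hs : 0 < s) (ht : 0 < t) :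
    2 * (p - 1) * (s + t) ^ (p - 2) ≤ s ^ (p - 2) + t ^ (p - 2) := by
  have hs' : (s + t) ^ (p - 2) ≤ s ^ (p - 2) :=
    Real.rpow_le_rpow_of_nonpos hs (by linarith) (by linarith)
  have ht' : (s + t) ^ (p - 2) ≤ t ^ (p - 2) :=
    Real.rpow_le_rpow_of_nonpos ht (by linarith) (by linarith)
  nlinarith [Real.rpow_nonneg (add_pos hs ht).le (p - 2)]

section Flux

variable {d : ℕ} {p : ℝ}

lemma inner_pFlux_sub_pFlux (hp : p ≠ 1) (a b : EuclideanSpace ℝ (Fin d)) :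
    ⟪pFlux d p a - pFlux d p b, a - b⟫ =
      (‖a‖ ^ (p - 1) - ‖b‖ ^ (p - 1)) * (‖a‖ - ‖b‖) +
        (‖a‖ ^ (p - 2) + ‖b‖ ^ (p - 2)) * (‖a‖ * ‖b‖ - ⟪a, b⟫) := by
  have hexp : p - 2 + 1 ≠ 0 := by contrapose! hp; linarith
  have ha := Real.rpow_add_one' (norm_nonneg a) hexp
  have hb := Real.rpow_add_one' (norm_nonneg b) hexp
  rw [show p - 2 + 1 = p - 1 by ring] at ha hb
  simp only [pFlux, inner_sub_left, inner_sub_right, real_inner_smul_left,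
    real_inner_self_eq_norm_sq, real_inner_comm b a, ha, hb]
  ring

lemma pFlux_coercive (hp1 : 1 < p) (hp2 : p ≤ 2) (a b : EuclideanSpace ℝ (Fin d)) :
    (p - 1) * (‖a‖ + ‖b‖) ^ (p - 2) * ‖a - b‖ ^ 2 ≤ ⟪pFlux d p a - pFlux d p b, a - b⟫ := by
  have hcs : 0 ≤ ‖a‖ * ‖b‖ - ⟪a, b⟫ := sub_nonneg.2 (real_inner_le_norm a b)
  have hradial := mul_add_rpow_mul_sq_le_rpow_sub_rpow_mul_sub hp1.le hp2
    (norm_nonneg a) (norm_nonneg b)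
  have hangular : 2 * (p - 1) * (‖a‖ + ‖b‖) ^ (p - 2) * (‖a‖ * ‖b‖ - ⟪a, b⟫) ≤
      (‖a‖ ^ (p - 2) + ‖b‖ ^ (p - 2)) * (‖a‖ * ‖b‖ - ⟪a, b⟫) := by
    rcases eq_or_ne a 0 with rfl | ha
    · simp
    rcases eq_or_ne b 0 with rfl | hb
    · simp
    exact mul_le_mul_of_nonneg_right
      (two_mul_add_rpow_le_rpow_add_rpow hp2 (norm_pos_iff.2 ha) (norm_pos_iff.2 hb)) hcs
  rw [inner_pFlux_sub_pFlux hp1.ne', show ‖a - b‖ ^ 2 = (‖a‖ - ‖b‖) ^ 2 +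
    2 * (‖a‖ * ‖b‖ - ⟪a, b⟫) by rw [norm_sub_sq_real]; ring]
  linarith

lemma inner_pFlux_sub_pFlux_nonneg (hp1 : 1 < p) (hp2 : p ≤ 2) (a b : EuclideanSpace ℝ (Fin d)) :
    0 ≤ ⟪pFlux d p a - pFlux d p b, a - b⟫ :=
  (pFlux_coercive hp1 hp2 a b).trans' (by have := hp1.le; positivity)

lemma norm_sub_sq_le_inner_pFlux (hp1 : 1 < p) (hp2 : p ≤ 2) (a b : EuclideanSpace ℝ (Fin d)) :
    ‖a - b‖ ^ 2 ≤ (p - 1)⁻¹ * ⟪pFlux d p a - pFlux d p b, a - b⟫ * (‖a‖ + ‖b‖) ^ (2 - p) := by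
  rcases (add_nonneg (norm_nonneg a) (norm_nonneg b)).eq_or_lt with hK | hK
  · obtain ⟨rfl, rfl⟩ : a = 0 ∧ b = 0 := by
      constructor <;> rw [← norm_eq_zero] <;> linarith [norm_nonneg a, norm_nonneg b]
    simp
  have hcoer := pFlux_coercive hp1 hp2 a b
  rw [show p - 2 = -(2 - p) by ring, Real.rpow_neg hK.le] at hcoer
  have hK' : 0 < (‖a‖ + ‖b‖) ^ (2 - p) := Real.rpow_pos_of_pos hK _
  have hp : 0 < p - 1 := by linarith
  calc ‖a - b‖ ^ 2
      = (p - 1)⁻¹ * ((p - 1) * ((‖a‖ + ‖b‖) ^ (2 - p))⁻¹ * ‖a - b‖ ^ 2) *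
          (‖a‖ + ‖b‖) ^ (2 - p) := by field_simp
    _ ≤ _ := by gcongr

lemma ofReal_norm_sub_rpow_le (hp1 : 1 < p) (hp2 : p ≤ 2) (a b : EuclideanSpace ℝ (Fin d)) :
    ENNReal.ofReal (‖a - b‖ ^ p) ≤
      ENNReal.ofReal ((p - 1)⁻¹ * ⟪pFlux d p a - pFlux d p b, a - b⟫) ^ (p / 2) *
        ENNReal.ofReal ((‖a‖ + ‖b‖) ^ p) ^ ((2 - p) / 2) := by
  have hc : 0 ≤ (p - 1)⁻¹ * ⟪pFlux d p a - pFlux d p b, a - b⟫ :=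
    mul_nonneg (inv_nonneg.2 (by linarith)) (inner_pFlux_sub_pFlux_nonneg hp1 hp2 a b)
  rw [ENNReal.ofReal_rpow_of_nonneg hc (by linarith),
    ENNReal.ofReal_rpow_of_nonneg (by positivity) (by linarith), ← ENNReal.ofReal_mul (by positivity)]
  refine ENNReal.ofReal_le_ofReal ?_
  calc ‖a - b‖ ^ p = (‖a - b‖ ^ 2) ^ (p / 2) := by
        rw [← Real.rpow_natCast, ← Real.rpow_mul (norm_nonneg _)]; ring_nf
    _ ≤ ((p - 1)⁻¹ * ⟪pFlux d p a - pFlux d p b, a - b⟫ * (‖a‖ + ‖b‖) ^ (2 - p)) ^ (p / 2) := by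
        gcongr; exact norm_sub_sq_le_inner_pFlux hp1 hp2 a b
    _ = _ := by
        rw [Real.mul_rpow hc (by positivity), ← Real.rpow_mul (by positivity),
          ← Real.rpow_mul (by positivity)]
        ring_nf

lemma measurable_pFlux : Measurable (pFlux d p) := by
  unfold pFlux; fun_prop

end Flux

section Integral

variable {Ω : Type*} [MeasurableSpace Ω] {μ : Measure Ω} {d : ℕ} {p : ℝ}
  {f g : Ω → EuclideanSpace ℝ (Fin d)}

lemma lintegral_norm_add_norm_rpow_le (hp : 1 ≤ p) (hf : AEMeasurable f μ)
    (hg : AEMeasurable g μ) :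
    (∫⁻ ω, ENNReal.ofReal ((‖f ω‖ + ‖g ω‖) ^ p) ∂μ) ^ (1 / p) ≤
      vecLpNorm μ f p + vecLpNorm μ g p := by
  have hofReal (x : ℝ) (hx : 0 ≤ x) : ENNReal.ofReal x ^ p = ENNReal.ofReal (x ^ p) :=
    ENNReal.ofReal_rpow_of_nonneg hx (by linarith)
  have := ENNReal.lintegral_Lp_add_le hf.norm.ennreal_ofReal hg.norm.ennreal_ofReal hp
  simpa only [vecLpNorm, Pi.add_apply, ← ENNReal.ofReal_add (norm_nonneg _) (norm_nonneg _),
    hofReal _ (norm_nonneg _), hofReal _ (add_nonneg (norm_nonneg _) (norm_nonneg _))] using this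

lemma vecLpNorm_sub_sq_le (hp1 : 1 < p) (hp2 : p ≤ 2) (hf : AEMeasurable f μ)
    (hg : AEMeasurable g μ) :
    vecLpNorm μ (fun ω => f ω - g ω) p ^ (2 : ℝ) ≤
      ENNReal.ofReal (p - 1)⁻¹ *
        (∫⁻ ω, ENNReal.ofReal ⟪pFlux d p (f ω) - pFlux d p (g ω), f ω - g ω⟫ ∂μ) *
        ((∫⁻ ω, ENNReal.ofReal ((‖f ω‖ + ‖g ω‖) ^ p) ∂μ) ^ (1 / p)) ^ (2 - p) := by
  have hflux : AEMeasurable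
      (fun ω => ENNReal.ofReal ((p - 1)⁻¹ * ⟪pFlux d p (f ω) - pFlux d p (g ω), f ω - g ω⟫)) μ :=
    (aemeasurable_const.mul (((measurable_pFlux.comp_aemeasurable hf).sub
      (measurable_pFlux.comp_aemeasurable hg)).inner (hf.sub hg))).ennreal_ofReal
  have hholder := (lintegral_mono fun ω => ofReal_norm_sub_rpow_le hp1 hp2 (f ω) (g ω)).trans
    (ENNReal.lintegral_mul_norm_pow_le hflux
      ((hf.norm.add hg.norm).pow_const p).ennreal_ofReal (by linarith) (by linarith) (by ring))
  have hconst : ∫⁻ ω, ENNReal.ofReal ((p - 1)⁻¹ * ⟪pFlux d p (f ω) - pFlux d p (g ω), f ω - g ω⟫) ∂μ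
      = ENNReal.ofReal (p - 1)⁻¹ *
        ∫⁻ ω, ENNReal.ofReal ⟪pFlux d p (f ω) - pFlux d p (g ω), f ω - g ω⟫ ∂μ := by
    simp_rw [ENNReal.ofReal_mul (inv_nonneg.2 (by linarith : (0:ℝ) ≤ p - 1))]
    exact lintegral_const_mul' _ _ ENNReal.ofReal_ne_top
  rw [hconst] at hholder
  have hp0 : 0 < p := by linarith
  calc vecLpNorm μ (fun ω => f ω - g ω) p ^ (2 : ℝ)
      = (∫⁻ ω, ENNReal.ofReal (‖f ω - g ω‖ ^ p) ∂μ) ^ (2 / p) := by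
        rw [vecLpNorm, ← ENNReal.rpow_mul]; ring_nf
    _ ≤ _ := ENNReal.rpow_le_rpow hholder (by positivity)
    _ = _ := by
        rw [ENNReal.mul_rpow_of_nonneg _ _ (by positivity), ← ENNReal.rpow_mul, ← ENNReal.rpow_mul,
          ← ENNReal.rpow_mul, show p / 2 * (2 / p) = 1 by field_simp, ENNReal.rpow_one]
        congr 2
        field_simp

end Integral

theorem stmt_15.{u} (d : ℕ) (hd : 1 ≤ d) (p : ℝ) (hp1 : 1 < p) (hp2 : p ≤ 2) :
    ∃ C > (0 : ℝ), ∀ (Ω : Type u) [MeasurableSpace Ω] (μ : Measure Ω)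
      (f g : Ω → EuclideanSpace ℝ (Fin d)), Measurable f → Measurable g →
      vecLpNorm μ f p ≠ ⊤ → vecLpNorm μ g p ≠ ⊤ →
      vecLpNorm μ (fun ω => f ω - g ω) p ^ (2 : ℝ) ≤
        ENNReal.ofReal C * (vecLpNorm μ f p + vecLpNorm μ g p) ^ (2 - p) *
          ∫⁻ ω, ENNReal.ofReal ⟪pFlux d p (f ω) - pFlux d p (g ω), f ω - g ω⟫ ∂μ := by
  refine ⟨(p - 1)⁻¹, inv_pos.2 (by linarith), fun Ω _ μ f g hf hg _ _ => ?_⟩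
  calc vecLpNorm μ (fun ω => f ω - g ω) p ^ (2 : ℝ)
      ≤ ENNReal.ofReal (p - 1)⁻¹ *
          (∫⁻ ω, ENNReal.ofReal ⟪pFlux d p (f ω) - pFlux d p (g ω), f ω - g ω⟫ ∂μ) *
          ((∫⁻ ω, ENNReal.ofReal ((‖f ω‖ + ‖g ω‖) ^ p) ∂μ) ^ (1 / p)) ^ (2 - p) :=
        vecLpNorm_sub_sq_le hp1 hp2 hf.aemeasurable hg.aemeasurable
    _ ≤ ENNReal.ofReal (p - 1)⁻¹ *
          (∫⁻ ω, ENNReal.ofReal ⟪pFlux d p (f ω) - pFlux d p (g ω), f ω - g ω⟫ ∂μ) *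
          (vecLpNorm μ f p + vecLpNorm μ g p) ^ (2 - p) := by
        gcongr
        exact lintegral_norm_add_norm_rpow_le hp1.le hf.aemeasurable hg.aemeasurable
    _ = _ := by ring
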